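/- Let I_u be independent Bernoulli random variables with P(I_u = 1) = p(u), where p(u) = 1 - (1 - Q(u))^{s} with Q(u) ∈ (0,1) and integer s ≥ 1. Suppose the coefficients satisfy a_u² ≤ M for all u ∈ V. Then Var(∑_{u ∈ V} (a_u / p(u)) I_u) ≤ M · ∑_{u ∈ V} (1/Q(u) - 1). -/

import Mathlib

/-!
Independence makes the variance additive, and a `{0,1}`-valued variable with success probability
`p` has variance `p (1 - p)`, so the estimator has variance `∑ u, a u ^ 2 * (1 / p u - 1)`.
Since `(1 - Q) ^ s ≤ 1 - Q` for `s ≥ 1`, the inclusion probability satisfies `Q ≤ p ≤ 1`, and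
`1 / p - 1` is antitone in `p`.
-/

open MeasureTheory ProbabilityTheory Finset

lemma eq_indicator_one_of_zero_or_one {Ω : Type*} {X : Ω → ℝ} (hX : ∀ ω, X ω = 0 ∨ X ω = 1) :
    X = {ω | X ω = 1}.indicator 1 := by
  ext ω
  rcases hX ω with h | h <;> simp [h]

section ZeroOne

variable {Ω : Type*} [MeasurableSpace Ω] {μ : Measure Ω}

lemma variance_indicator_one [IsProbabilityMeasure μ] {s : Set Ω} (hs : MeasurableSet s) :
    Var[s.indicator 1; μ] = μ.real s * (1 - μ.real s) := by
  have hsq : s.indicator (1 : Ω → ℝ) ^ 2 = s.indicator 1 := by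
    ext ω
    by_cases hω : ω ∈ s <;> simp [hω]
  have hmem : MemLp (s.indicator (1 : Ω → ℝ)) 2 μ :=
    memLp_indicator_const 2 hs 1 (Or.inr (measure_ne_top μ s))
  rw [variance_eq_sub hmem, hsq, integral_indicator_one hs]
  ring

lemma variance_of_zero_or_one [IsProbabilityMeasure μ] {X : Ω → ℝ} (hXm : Measurable X)
    (hX : ∀ ω, X ω = 0 ∨ X ω = 1) :
    Var[X; μ] = μ.real {ω | X ω = 1} * (1 - μ.real {ω | X ω = 1}) := by
  conv_lhs => rw [eq_indicator_one_of_zero_or_one hX]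
  exact variance_indicator_one (hXm (measurableSet_singleton 1))

lemma memLp_of_zero_or_one [IsFiniteMeasure μ] {X : Ω → ℝ} (hXm : AEStronglyMeasurable X μ)
    (hX : ∀ ω, X ω = 0 ∨ X ω = 1) (p : ENNReal) : MemLp X p μ :=
  MemLp.of_bound hXm 1 <| ae_of_all _ fun ω => by rcases hX ω with h | h <;> simp [h]

lemma ProbabilityTheory.iIndepFun.variance_sum_const_mul {ι : Type*} [Fintype ι]
    [IsProbabilityMeasure μ] {X : ι → Ω → ℝ} (hX : ∀ i, MemLp (X i) 2 μ) (hindep : iIndepFun X μ) (c : ι → ℝ) :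
    Var[fun ω => ∑ i, c i * X i ω; μ] = ∑ i, c i ^ 2 * Var[X i; μ] := by
  have hsum := IndepFun.variance_sum (μ := μ) (X := fun i => c i • X i) (s := univ)
    (fun i _ => (hX i).const_smul (c i)) fun i _ j _ hij =>
      (hindep.indepFun hij).comp (measurable_const_mul (c i)) (measurable_const_mul (c j))
  simp only [variance_smul] at hsum
  rw [← hsum]
  congr 1
  ext ω
  simp

end ZeroOne

lemma le_one_sub_one_sub_pow {q : ℝ} (hq0 : 0 ≤ q) (hq1 : q ≤ 1) {s : ℕ} (hs : 1 ≤ s) :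
    q ≤ 1 - (1 - q) ^ s := by
  have : (1 - q) ^ s ≤ 1 - q := pow_le_of_le_one (by linarith) (by linarith) (by omega)
  linarith

lemma variance_horvitzThompson {Ω : Type*} [MeasurableSpace Ω] {μ : Measure Ω}
    [IsProbabilityMeasure μ] {V : Type*} [Fintype V] {I : V → Ω → ℝ} {p : V → ℝ}
    (hmeas : ∀ u, Measurable (I u)) (hBer : ∀ u ω, I u ω = 0 ∨ I u ω = 1)
    (hprob : ∀ u, μ {ω | I u ω = 1} = ENNReal.ofReal (p u)) (hp : ∀ u, 0 < p u)
    (hindep : iIndepFun I μ) (a : V → ℝ) :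
    Var[fun ω => ∑ u, (a u / p u) * I u ω; μ] = ∑ u, a u ^ 2 * (1 / p u - 1) := by
  rw [hindep.variance_sum_const_mul
    (fun u => memLp_of_zero_or_one (hmeas u).aestronglyMeasurable (hBer u) 2)]
  refine sum_congr rfl fun u _ => ?_
  rw [variance_of_zero_or_one (hmeas u) (hBer u), measureReal_def, hprob u,
    ENNReal.toReal_ofReal (hp u).le]
  field_simp [(hp u).ne']

/-- Variance bound for the subgraph-sampled estimator (single coordinate form of
Theorem 2 of PPSGCN): with independent Bernoulli `I u`, `P(I u = 1) = p u` where
`p u = 1 - (1 - Q u)^s`, `Q u ∈ (0,1)`, `s ≥ 1`, and coefficients with `(a u)^2 ≤ M`,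
we have `Var(∑ u, (a u / p u) * I u) ≤ M * ∑ u, (1 / Q u - 1)`. -/
theorem horvitz_thompson_variance_bound
    {Ω : Type*} [MeasurableSpace Ω] (μ : Measure Ω) [IsProbabilityMeasure μ]
    {V : Type*} [Fintype V]
    (I : V → Ω → ℝ) (Q p : V → ℝ) (a : V → ℝ) (M : ℝ)
    (s : ℕ) (hs : 1 ≤ s)
    (hQ0 : ∀ u, 0 < Q u) (hQ1 : ∀ u, Q u < 1)
    (hpdef : ∀ u, p u = 1 - (1 - Q u) ^ s)
    (hmeas : ∀ u, Measurable (I u))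
    (hBer : ∀ u, ∀ ω, I u ω = 0 ∨ I u ω = 1)
    (hprob : ∀ u, μ {ω | I u ω = 1} = ENNReal.ofReal (p u))
    (hindep : iIndepFun I μ)
    (ha : ∀ u, (a u) ^ 2 ≤ M) :
    variance (fun ω => ∑ u, (a u / p u) * I u ω) μ
      ≤ M * ∑ u, (1 / Q u - 1) := by
  have hQp : ∀ u, Q u ≤ p u := fun u =>
    hpdef u ▸ le_one_sub_one_sub_pow (hQ0 u).le (hQ1 u).le hs
  have hp1 : ∀ u, p u ≤ 1 := fun u =>
    hpdef u ▸ sub_le_self 1 (pow_nonneg (by linarith [hQ1 u]) s)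
  have hp0 : ∀ u, 0 < p u := fun u => (hQ0 u).trans_le (hQp u)
  rw [variance_horvitzThompson hmeas hBer hprob hp0 hindep a, mul_sum]
  refine sum_le_sum fun u _ => mul_le_mul (ha u) ?_ ?_ ((sq_nonneg _).trans (ha u))
  · gcongr
    exacts [hQ0 u, hQp u]
  · rw [sub_nonneg, le_div_iff₀ (hp0 u)]
    simpa using hp1 u
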